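/- Let F : Set S → Set S be completely additive. Define the relation ⇝ on S by t ⇝ t' iff t' ∈ F({t}). Then for every s ∈ S: s ∈ LFP(F) if and only if there exists t₁ ∈ F(∅) such that (t₁, s) is in the reflexive-transitive closure of ⇝. -/

import Mathlib

def CompletelyAdditive {S : Type} (F : Set S → Set S) : Prop :=
  ∀ (ι : Type) [Nonempty ι] (Y : ι → Set S), F (⋃ i, Y i) = ⋃ i, F (Y i)

def setLfp {S : Type} (F : Set S → Set S) : Set S :=
  ⋂₀ {X : Set S | F X ⊆ X}

/-! The reachable set `R` is a pre-fixed point of `F`: if `R = ∅` then `F R = F ∅ ⊆ R`, and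
otherwise additivity over the singletons of `R` writes `F R` as the union of the one-step successor
sets `F {t}`, `t ∈ R`. Hence `setLfp F ⊆ R`. Conversely, by monotonicity every pre-fixed point
contains `F ∅` and is closed under `t ↦ F {t}`, so it contains `R` by induction on the path. -/

theorem setLfp_subset {S : Type} {F : Set S → Set S} {X : Set S} (hX : F X ⊆ X) :
    setLfp F ⊆ X :=
  Set.sInter_subset_of_mem hX

def reachableSet {S : Type} (F : Set S → Set S) : Set S :=
  {s | ∃ t ∈ F ∅, Relation.ReflTransGen (fun a b => b ∈ F {a}) t s}

theorem reachableSet_subset_of_monotone {S : Type} {F : Set S → Set S} (hF : Monotone F)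
    {X : Set S} (hX : F X ⊆ X) : reachableSet F ⊆ X := by
  rintro s ⟨t, ht, hpath⟩
  induction hpath with
  | refl => exact hX (hF (Set.empty_subset X) ht)
  | tail _ hstep ih => exact hX (hF (Set.singleton_subset_iff.mpr ih) hstep)

theorem reachableSet_subset_setLfp_of_monotone {S : Type} {F : Set S → Set S}
    (hF : Monotone F) : reachableSet F ⊆ setLfp F :=
  Set.subset_sInter fun _ hX => reachableSet_subset_of_monotone hF hX

namespace CompletelyAdditive

variable {S : Type} {F : Set S → Set S}

theorem map_union (hF : CompletelyAdditive F) (X Y : Set S) : F (X ∪ Y) = F X ∪ F Y := by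
  rw [Set.union_eq_iUnion, hF Bool, Set.union_eq_iUnion]
  congr with b
  cases b <;> rfl

theorem monotone (hF : CompletelyAdditive F) : Monotone F := fun X Y hXY => by
  rw [← Set.union_eq_self_of_subset_left hXY, hF.map_union]
  exact Set.subset_union_left

theorem eq_iUnion_singleton (hF : CompletelyAdditive F) {X : Set S} (hX : X.Nonempty) :
    F X = ⋃ x : X, F {(x : S)} := by
  have := hX.to_subtype
  conv_lhs => rw [← Set.iUnion_of_singleton_coe X]
  exact hF X _

theorem map_reachableSet_subset (hF : CompletelyAdditive F) :
    F (reachableSet F) ⊆ reachableSet F := by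
  rcases (reachableSet F).eq_empty_or_nonempty with hR | hR
  · intro s hs
    rw [hR] at hs
    exact ⟨s, hs, .refl⟩
  · rw [hF.eq_iUnion_singleton hR]
    rintro s hs
    obtain ⟨⟨t, t₀, ht₀, hpath⟩, hstep⟩ := Set.mem_iUnion.mp hs
    exact ⟨t₀, ht₀, hpath.tail hstep⟩

theorem setLfp_eq_reachableSet (hF : CompletelyAdditive F) : setLfp F = reachableSet F :=
  (setLfp_subset hF.map_reachableSet_subset).antisymm
    (reachableSet_subset_setLfp_of_monotone hF.monotone)

end CompletelyAdditive

theorem lfp_completelyAdditive_reachability {S : Type} (F : Set S → Set S)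
    (h : CompletelyAdditive F) (s : S) :
    s ∈ setLfp F ↔
      ∃ t₁ ∈ F ∅, Relation.ReflTransGen (fun a b => b ∈ F {a}) t₁ s := by
  rw [h.setLfp_eq_reachableSet]
  rfl
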